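/- The minimum of a linear functional P ↦ <C,P> over the Birkhoff polytope of n×n doubly stochastic matrices is attained at some permutation matrix. -/

import Mathlib

open Finset

/-
By Birkhoff's theorem the doubly stochastic matrices are the convex hull of the
permutation matrices, and a linear functional (being concave) attains its minimum over a convex
hull at one of the generating points.  Hence a permutation matrix minimising `⟪C, ·⟫` among the
finitely many permutation matrices minimises it over the whole polytope.
-/

variable {R ι : Type*} [Fintype ι]

section CommSemiring

variable [CommSemiring R]

def Matrix.entrywisePairing (C : Matrix ι ι R) : Matrix ι ι R →ₗ[R] R where
  toFun P := ∑ i, ∑ j, C i j * P i j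
  map_add' P Q := by simp only [Matrix.add_apply, mul_add, sum_add_distrib]
  map_smul' c P := by
    simp only [Matrix.smul_apply, smul_eq_mul, mul_sum, RingHom.id_apply, mul_left_comm]

lemma Matrix.entrywisePairing_apply (C P : Matrix ι ι R) :
    C.entrywisePairing P = ∑ i, ∑ j, C i j * P i j := rfl

lemma Matrix.entrywisePairing_permMatrix [DecidableEq ι] (C : Matrix ι ι R) (σ : Equiv.Perm ι) :
    C.entrywisePairing (σ.permMatrix R) = ∑ i, ∑ j, C i j * if σ i = j then 1 else 0 := by
  simp [entrywisePairing_apply, Equiv.Perm.permMatrix, PEquiv.toMatrix_apply]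

end CommSemiring

variable [DecidableEq ι] [Field R] [LinearOrder R] [IsStrictOrderedRing R]

lemma Matrix.exists_permMatrix_entrywisePairing_le {P : Matrix ι ι R}
    (hP : P ∈ doublyStochastic R ι) (C : Matrix ι ι R) :
    ∃ σ : Equiv.Perm ι, C.entrywisePairing (σ.permMatrix R) ≤ C.entrywisePairing P := by
  rw [← SetLike.mem_coe, doublyStochastic_eq_convexHull_permMatrix] at hP
  obtain ⟨_, ⟨σ, rfl⟩, hσ⟩ :=
    (C.entrywisePairing.concaveOn convex_univ).exists_le_of_mem_convexHull (Set.subset_univ _) hP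
  exact ⟨σ, hσ⟩

lemma Matrix.exists_permMatrix_isMinOn_entrywisePairing (C : Matrix ι ι R) :
    ∃ σ : Equiv.Perm ι, IsMinOn C.entrywisePairing (doublyStochastic R ι) (σ.permMatrix R) := by
  obtain ⟨σ, -, hσ⟩ := exists_min_image univ (fun σ : Equiv.Perm ι ↦
    C.entrywisePairing (σ.permMatrix R)) univ_nonempty
  refine ⟨σ, isMinOn_iff.2 fun P hP ↦ ?_⟩
  obtain ⟨τ, hτ⟩ := exists_permMatrix_entrywisePairing_le hP C
  exact (hσ τ (mem_univ τ)).trans hτ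

theorem stmt1_general (n : ℕ) (C : Matrix (Fin n) (Fin n) ℝ) :
    ∃ σ : Equiv.Perm (Fin n),
      ∀ P : Matrix (Fin n) (Fin n) ℝ,
        (∀ i j, 0 ≤ P i j) →
        (∀ i, ∑ j, P i j = 1) →
        (∀ j, ∑ i, P i j = 1) →
        (∑ i, ∑ j, C i j * (if σ i = j then (1 : ℝ) else 0)) ≤ ∑ i, ∑ j, C i j * P i j := by
  obtain ⟨σ, hσ⟩ := C.exists_permMatrix_isMinOn_entrywisePairing
  refine ⟨σ, fun P hnonneg hrow hcol ↦ ?_⟩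
  rw [← C.entrywisePairing_permMatrix, ← C.entrywisePairing_apply]
  exact isMinOn_iff.1 hσ P (mem_doublyStochastic_iff_sum.2 ⟨hnonneg, hrow, hcol⟩)

/-- The minimum of the linear functional `P ↦ ⟪C,P⟫` over the Birkhoff polytope of
`n × n` doubly stochastic matrices is attained at some permutation matrix. -/
theorem stmt1 (n : ℕ) (hn : 0 < n) (C : Matrix (Fin n) (Fin n) ℝ) :
    ∃ σ : Equiv.Perm (Fin n),
      ∀ P : Matrix (Fin n) (Fin n) ℝ,
        (∀ i j, 0 ≤ P i j) →
        (∀ i, ∑ j, P i j = 1) →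
        (∀ j, ∑ i, P i j = 1) →
        (∑ i, ∑ j, C i j * (if σ i = j then (1 : ℝ) else 0)) ≤ ∑ i, ∑ j, C i j * P i j :=
  stmt1_general n C
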